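/- Let m ≥ 5 be an integer and let I ⊂ K[x,y] be the symmetric monomial ideal whose a-sequence is (a_1, …, a_m) = (5m, 4m, 4m−1, …, 3m+4, m, 0), i.e. I = (x^{5m}, x^{4m}y^m, x^{4m−1}y^{3m+4}, …, x^{3m+4}y^{4m−1}, x^m y^{4m}, y^{5m}) with b_i = a_{m−i+1}. Then depth F(I) = 0. In fact, every minimal generator u of I of degree 7m+3 satisfies uI ⊆ mI², so u + mI is a nonzero socle element of F(I). -/

import Mathlib

open MvPolynomial

noncomputable section

/-- The graded maximal ideal `m = (x, y)` of `K[x,y]`. -/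
def mxy (K : Type) [Field K] : Ideal (MvPolynomial (Fin 2) K) := Ideal.span {X 0, X 1}

/-- The fiber cone `F(I) = R(I) / m R(I)` of an ideal `I ⊆ K[x,y]`, where
`R(I) = ⊕_{k ≥ 0} I^k` is the Rees algebra of `I` and `m = (x, y)`. -/
abbrev FiberCone (K : Type) [Field K] (I : Ideal (MvPolynomial (Fin 2) K)) : Type :=
  ↥(reesAlgebra I) ⧸
    (Ideal.map (algebraMap (MvPolynomial (Fin 2) K) ↥(reesAlgebra I)) (mxy K))

/-- The graded maximal ideal of the fiber cone `F(I)`: the image in `F(I)` of the set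
of elements of the Rees algebra whose degree-zero coefficient lies in `m = (x, y)`. -/
def fiberMax (K : Type) [Field K] (I : Ideal (MvPolynomial (Fin 2) K)) :
    Ideal (FiberCone K I) :=
  Ideal.map (Ideal.Quotient.mk _)
    (RingHom.ker ((Ideal.Quotient.mk (mxy K)).comp
      ((Polynomial.evalRingHom (0 : MvPolynomial (Fin 2) K)).comp
        (Subalgebra.val (reesAlgebra I)).toRingHom)))

/-- The depth of an ideal `J` on a ring `A`: the supremum of the lengths of
regular sequences on `A` consisting of elements of `J`. -/
def idealDepth {A : Type*} [CommRing A] (J : Ideal A) : ℕ∞ :=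
  sSup {n : ℕ∞ | ∃ rs : List A, (∀ r ∈ rs, r ∈ J) ∧
    RingTheory.Sequence.IsRegular A rs ∧ (rs.length : ℕ∞) = n}

/-- The `a`-sequence `(a 1, …, a m) = (5m, 4m, 4m-1, …, 3m+4, m, 0)` (of length `m`):
`a 1 = 5m`, `a 2 = 4m`, `a i = 4m - (i - 2)` for `3 ≤ i ≤ m-2`, `a (m-1) = m`,
`a m = 0`. -/
def aseq (m : ℕ) (i : ℕ) : ℕ :=
  if i = 1 then 5 * m
  else if i = 2 then 4 * m
  else if i ≤ m - 2 then 4 * m - (i - 2)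
  else if i = m - 1 then m
  else 0


open Pointwise
set_option synthInstance.maxHeartbeats 1000000
set_option maxHeartbeats 1000000

variable {K : Type} [Field K]

variable {K : Type} [Field K]

def E (a b : ℕ) : Fin 2 →₀ ℕ := Finsupp.single 0 a + Finsupp.single 1 b

lemma E_add (a b c d : ℕ) : E a b + E c d = E (a + c) (b + d) := by
  simp [E, Finsupp.single_add, add_add_add_comm]

lemma E_le_iff {a b c d : ℕ} : E a b ≤ E c d ↔ a ≤ c ∧ b ≤ d := by
  constructor
  · intro h
    rw [Finsupp.le_def] at h
    have h0 := h 0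
    have h1 := h 1
    simp [E, Finsupp.single_apply] at h0 h1
    exact ⟨h0, h1⟩
  · rintro ⟨h1, h2⟩
    rw [Finsupp.le_def]
    intro i
    fin_cases i <;> simp [E, Finsupp.single_apply, h1, h2]

lemma X_pow_mul_eq (a b : ℕ) :
    (X 0 : MvPolynomial (Fin 2) K) ^ a * X 1 ^ b = monomial (E a b) 1 := by
  rw [X_pow_eq_monomial, X_pow_eq_monomial, monomial_mul, one_mul, E]

lemma span_mono_mul (A B : Set (Fin 2 →₀ ℕ)) :
    Ideal.span ((fun s => monomial s (1 : K)) '' A) *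
      Ideal.span ((fun s => monomial s (1 : K)) '' B) =
    Ideal.span ((fun s => monomial s (1 : K)) '' (A + B)) := by
  rw [Ideal.span_mul_span']
  congr 1
  ext p
  constructor
  · rintro ⟨_, ⟨a, ha, rfl⟩, _, ⟨b, hb, rfl⟩, rfl⟩
    exact ⟨a + b, ⟨a, ha, b, hb, rfl⟩, by simp [monomial_mul]⟩
  · rintro ⟨_, ⟨a, ha, b, hb, rfl⟩, rfl⟩
    exact ⟨monomial a 1, ⟨a, ha, rfl⟩, monomial b 1, ⟨b, hb, rfl⟩, by simp [monomial_mul]⟩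

lemma mem_span_mono {T : Set (Fin 2 →₀ ℕ)} {e : Fin 2 →₀ ℕ} :
    (monomial e (1 : K)) ∈ Ideal.span ((fun s => monomial s (1 : K)) '' T) ↔
      ∃ t ∈ T, t ≤ e := by
  rw [mem_ideal_span_monomial_image]
  simp [support_monomial]

lemma av1 (m : ℕ) (hm : 5 ≤ m) : aseq m 1 = 5*m ∧ aseq m (m-1+1) = 0 := by
  refine ⟨?_, ?_⟩ <;> (unfold aseq; split_ifs <;> omega)
lemma av2 (m : ℕ) (hm : 5 ≤ m) : aseq m 2 = 4*m ∧ aseq m (m-2+1) = m := by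
  refine ⟨?_, ?_⟩ <;> (unfold aseq; split_ifs <;> omega)
lemma avmid (m j : ℕ) (hm : 5 ≤ m) (h3 : 3 ≤ j) (hj : j ≤ m-2) :
    aseq m j = 4*m+2-j ∧ aseq m (m-j+1) = 3*m+1+j := by
  refine ⟨?_, ?_⟩ <;> (unfold aseq; split_ifs <;> omega)
lemma avm1 (m : ℕ) (hm : 5 ≤ m) : aseq m (m-1) = m ∧ aseq m (m-(m-1)+1) = 4*m := by
  refine ⟨?_, ?_⟩ <;> (unfold aseq; split_ifs <;> omega)
lemma avm (m : ℕ) (hm : 5 ≤ m) : aseq m m = 0 ∧ aseq m (m-m+1) = 5*m := by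
  refine ⟨?_, ?_⟩ <;> (unfold aseq; split_ifs <;> omega)

def TS (m : ℕ) : Set (Fin 2 →₀ ℕ) := (fun j => E (aseq m j) (aseq m (m - j + 1))) '' Set.Icc 1 m

lemma I_span_eq (m : ℕ) :
    Ideal.span ((fun i => X 0 ^ aseq m i * X 1 ^ aseq m (m - i + 1)) '' Set.Icc 1 m :
        Set (MvPolynomial (Fin 2) K)) =
    Ideal.span ((fun s => monomial s (1 : K)) '' TS m) := by
  rw [TS, Set.image_image]
  simp only [X_pow_mul_eq]

def WS : Set (Fin 2 →₀ ℕ) := {E 1 0, E 0 1}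

lemma mxy_eq : mxy K = Ideal.span ((fun s => monomial s (1:K)) '' WS) := by
  have h0 : (X 0 : MvPolynomial (Fin 2) K) = monomial (E 1 0) 1 := by
    rw [← X_pow_mul_eq]; simp
  have h1 : (X 1 : MvPolynomial (Fin 2) K) = monomial (E 0 1) 1 := by
    rw [← X_pow_mul_eq]; simp
  rw [mxy, WS, Set.image_pair, h0, h1]

lemma mem_WTT (m : ℕ) {j1 j2 : ℕ} (h1 : j1 ∈ Set.Icc 1 m) (h2 : j2 ∈ Set.Icc 1 m)
    (e : Fin 2 →₀ ℕ) (he : e ∈ WS) :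
    e + (E (aseq m j1) (aseq m (m-j1+1)) + E (aseq m j2) (aseq m (m-j2+1))) ∈ WS + (TS m + TS m) :=
  ⟨e, he, _, ⟨_, ⟨j1, h1, rfl⟩, _, ⟨j2, h2, rfl⟩, rfl⟩, rfl⟩

lemma key (K : Type) [Field K] (m : ℕ) (hm : 5 ≤ m) (i : ℕ) (h3 : 3 ≤ i) (hi : i ≤ m - 2)
    (I : Ideal (MvPolynomial (Fin 2) K))
    (hI : I = Ideal.span
      ((fun i => X 0 ^ aseq m i * X 1 ^ aseq m (m - i + 1)) '' Set.Icc 1 m)) :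
    Ideal.span {X 0 ^ aseq m i * X 1 ^ aseq m (m - i + 1)} * I ≤ mxy K * I ^ 2 ∧
      X 0 ^ aseq m i * X 1 ^ aseq m (m - i + 1) ∉ mxy K * I := by
  subst hI
  rw [I_span_eq, mxy_eq]
  obtain ⟨hA, hB⟩ := avmid m i hm h3 hi
  obtain ⟨q11, q12⟩ := av1 m hm
  obtain ⟨q21, q22⟩ := av2 m hm
  obtain ⟨s1, s2⟩ := avm1 m hm
  obtain ⟨t1, t2⟩ := avm m hm
  have m2 : (2:ℕ) ∈ Set.Icc 1 m := by rw [Set.mem_Icc]; omega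
  have m1' : (1:ℕ) ∈ Set.Icc 1 m := by rw [Set.mem_Icc]; omega
  have mm1 : m-1 ∈ Set.Icc 1 m := by rw [Set.mem_Icc]; omega
  have mm : m ∈ Set.Icc 1 m := by rw [Set.mem_Icc]; omega
  have he0 : E 1 0 ∈ WS := Set.mem_insert _ _
  have he1 : E 0 1 ∈ WS := Set.mem_insert_iff.mpr (Or.inr rfl)
  have hsingle : ({X 0 ^ aseq m i * X 1 ^ aseq m (m - i + 1)} :
      Set (MvPolynomial (Fin 2) K)) =
      (fun s => monomial s (1:K)) '' {E (aseq m i) (aseq m (m - i + 1))} := by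
    rw [Set.image_singleton, X_pow_mul_eq]
  constructor
  · rw [hsingle, sq, span_mono_mul, span_mono_mul, span_mono_mul, Ideal.span_le]
    rintro p ⟨s, ⟨x, rfl, t, ⟨j, hj, rfl⟩, rfl⟩, rfl⟩
    rw [Set.mem_Icc] at hj
    have hcase : j = 1 ∨ j = 2 ∨ (3 ≤ j ∧ j ≤ m-2) ∨ j = m-1 ∨ j = m := by omega
    show (monomial (E (aseq m i) (aseq m (m-i+1)) + E (aseq m j) (aseq m (m-j+1))) 1 :
        MvPolynomial (Fin 2) K) ∈
      Ideal.span ((fun s => monomial s (1:K)) '' (WS + (TS m + TS m)))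
    rcases hcase with h | h | ⟨u1, u2⟩ | h | h
    · have q1 : aseq m j = 5*m := by rw [h]; exact q11
      have q2 : aseq m (m - j + 1) = 0 := by rw [h]; exact q12
      refine mem_span_mono.mpr ⟨_, mem_WTT m m2 m2 _ he0, ?_⟩
      simp only [E_add, E_le_iff]; omega
    · have q1 : aseq m j = 4*m := by rw [h]; exact q21
      have q2 : aseq m (m - j + 1) = m := by rw [h]; exact q22
      refine mem_span_mono.mpr ⟨_, mem_WTT m m1' mm1 _ he0, ?_⟩
      simp only [E_add, E_le_iff]; omega
    · obtain ⟨q1, q2⟩ := avmid m j hm u1 u2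
      refine mem_span_mono.mpr ⟨_, mem_WTT m m2 mm1 _ he0, ?_⟩
      simp only [E_add, E_le_iff]; omega
    · have q1 : aseq m j = m := by rw [h]; exact s1
      have q2 : aseq m (m - j + 1) = 4*m := by rw [h]; exact s2
      refine mem_span_mono.mpr ⟨_, mem_WTT m m2 mm _ he1, ?_⟩
      simp only [E_add, E_le_iff]; omega
    · have q1 : aseq m j = 0 := by rw [h]; exact t1
      have q2 : aseq m (m - j + 1) = 5*m := by rw [h]; exact t2
      refine mem_span_mono.mpr ⟨_, mem_WTT m mm1 mm1 _ he1, ?_⟩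
      simp only [E_add, E_le_iff]; omega
  · rw [span_mono_mul, X_pow_mul_eq, mem_span_mono]
    rintro ⟨w, ⟨e, he, t, ⟨j, hj, rfl⟩, rfl⟩, hle⟩
    rw [Set.mem_Icc] at hj
    simp only [WS, Set.mem_insert_iff, Set.mem_singleton_iff] at he
    have hcase : j = 1 ∨ j = 2 ∨ (3 ≤ j ∧ j ≤ m-2) ∨ j = m-1 ∨ j = m := by omega
    rcases hcase with h | h | ⟨u1, u2⟩ | h | h
    · have q1 : aseq m j = 5*m := by rw [h]; exact q11
      have q2 : aseq m (m - j + 1) = 0 := by rw [h]; exact q12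
      rcases he with rfl | rfl <;> (simp only [E_add, E_le_iff] at hle; omega)
    · have q1 : aseq m j = 4*m := by rw [h]; exact q21
      have q2 : aseq m (m - j + 1) = m := by rw [h]; exact q22
      rcases he with rfl | rfl <;> (simp only [E_add, E_le_iff] at hle; omega)
    · obtain ⟨q1, q2⟩ := avmid m j hm u1 u2
      rcases he with rfl | rfl <;> (simp only [E_add, E_le_iff] at hle; omega)
    · have q1 : aseq m j = m := by rw [h]; exact s1
      have q2 : aseq m (m - j + 1) = 4*m := by rw [h]; exact s2
      rcases he with rfl | rfl <;> (simp only [E_add, E_le_iff] at hle; omega)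
    · have q1 : aseq m j = 0 := by rw [h]; exact t1
      have q2 : aseq m (m - j + 1) = 5*m := by rw [h]; exact t2
      rcases he with rfl | rfl <;> (simp only [E_add, E_le_iff] at hle; omega)

lemma coeff_one_mul' {R : Type*} [CommRing R] (p q : Polynomial R) :
    (p * q).coeff 1 = p.coeff 0 * q.coeff 1 + p.coeff 1 * q.coeff 0 := by
  rw [Polynomial.coeff_mul, Finset.Nat.sum_antidiagonal_eq_sum_range_succ_mk]
  simp [Finset.sum_range_succ]

variable {K : Type} [Field K]

/-- C1: elements of `m·R(I)` have coeff 0 in `m` and coeff 1 in `m·I`. -/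
lemma coeff_mem_of_mem_map (I : Ideal (MvPolynomial (Fin 2) K)) {p : reesAlgebra I}
    (hp : p ∈ Ideal.map (algebraMap (MvPolynomial (Fin 2) K) ↥(reesAlgebra I)) (mxy K)) :
    (p : Polynomial (MvPolynomial (Fin 2) K)).coeff 0 ∈ mxy K ∧
      (p : Polynomial (MvPolynomial (Fin 2) K)).coeff 1 ∈ mxy K * I := by
  rw [Ideal.map] at hp
  refine Submodule.span_induction ?_ ?_ ?_ ?_ hp
  · rintro x ⟨c, hc, rfl⟩
    constructor
    · show ((algebraMap _ (reesAlgebra I) c : reesAlgebra I) :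
        Polynomial (MvPolynomial (Fin 2) K)).coeff 0 ∈ mxy K
      rw [Subalgebra.coe_algebraMap]
      simpa using hc
    · show ((algebraMap _ (reesAlgebra I) c : reesAlgebra I) :
        Polynomial (MvPolynomial (Fin 2) K)).coeff 1 ∈ mxy K * I
      rw [Subalgebra.coe_algebraMap]
      simp
  · simp
  · rintro x y hx hy ⟨hx0, hx1⟩ ⟨hy0, hy1⟩
    constructor
    · push_cast
      rw [Polynomial.coeff_add]
      exact Ideal.add_mem _ hx0 hy0
    · push_cast
      rw [Polynomial.coeff_add]
      exact Ideal.add_mem _ hx1 hy1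
  · rintro a x hx ⟨hx0, hx1⟩
    have hax : ((a • x : reesAlgebra I) : Polynomial (MvPolynomial (Fin 2) K)) =
        (a : Polynomial _) * (x : Polynomial _) := rfl
    constructor
    · rw [hax, Polynomial.mul_coeff_zero]
      exact Ideal.mul_mem_left _ _ hx0
    · rw [hax, coeff_one_mul']
      refine Ideal.add_mem _ (Ideal.mul_mem_left _ _ hx1) ?_
      rw [mul_comm (mxy K) I]
      have ha1 : (a : Polynomial (MvPolynomial (Fin 2) K)).coeff 1 ∈ I := by
        simpa [pow_one] using a.2 1
      exact Ideal.mul_mem_mul ha1 hx0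

/-- C2: a monomial `t^k·s` with `s ∈ m·I^k` lies in `m·R(I)`. -/
lemma monomial_mem_map (I : Ideal (MvPolynomial (Fin 2) K)) (k : ℕ) (s : MvPolynomial (Fin 2) K)
    (hs : s ∈ mxy K * I ^ k) (h : Polynomial.monomial k s ∈ reesAlgebra I) :
    (⟨Polynomial.monomial k s, h⟩ : reesAlgebra I) ∈
      Ideal.map (algebraMap (MvPolynomial (Fin 2) K) ↥(reesAlgebra I)) (mxy K) := by
  have H : s ∈ I ^ k ∧ ∀ (h : Polynomial.monomial k s ∈ reesAlgebra I),
      (⟨Polynomial.monomial k s, h⟩ : reesAlgebra I) ∈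
        Ideal.map (algebraMap (MvPolynomial (Fin 2) K) ↥(reesAlgebra I)) (mxy K) := by
    refine Submodule.mul_induction_on hs ?_ ?_
    · intro c hc v hv
      refine ⟨Ideal.mul_mem_left _ _ hv, ?_⟩
      intro h
      have hv' : Polynomial.monomial k v ∈ reesAlgebra I := reesAlgebra.monomial_mem.mpr hv
      have he : (⟨Polynomial.monomial k (c*v), h⟩ : reesAlgebra I)
          = algebraMap _ _ c * ⟨Polynomial.monomial k v, hv'⟩ := by
        apply Subtype.ext
        push_cast
        rw [Polynomial.algebraMap_eq, Polynomial.C_mul_monomial]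
      rw [he]
      exact Ideal.mul_mem_right _ _ (Ideal.mem_map_of_mem _ hc)
    · rintro x y ⟨hx1, hx2⟩ ⟨hy1, hy2⟩
      refine ⟨Submodule.add_mem _ hx1 hy1, ?_⟩
      intro h
      have hx' : Polynomial.monomial k x ∈ reesAlgebra I := reesAlgebra.monomial_mem.mpr hx1
      have hy' : Polynomial.monomial k y ∈ reesAlgebra I := reesAlgebra.monomial_mem.mpr hy1
      have he : (⟨Polynomial.monomial k (x+y), h⟩ : reesAlgebra I)
          = ⟨Polynomial.monomial k x, hx'⟩ + ⟨Polynomial.monomial k y, hy'⟩ := by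
        apply Subtype.ext
        push_cast
        rw [map_add]
      rw [he]
      exact Ideal.add_mem _ (hx2 hx') (hy2 hy')
  exact H.2 h

/-- C3: multiplying the degree-one socle element by any `w` with `w₀ ∈ m` lands in `m·R(I)`. -/
lemma socle_mul_mem (I : Ideal (MvPolynomial (Fin 2) K)) (u : MvPolynomial (Fin 2) K)
    (hu : u ∈ I) (hu2 : Ideal.span {u} * I ≤ mxy K * I ^ 2)
    (hum : Polynomial.monomial 1 u ∈ reesAlgebra I)
    (w : reesAlgebra I) (hw0 : (w : Polynomial (MvPolynomial (Fin 2) K)).coeff 0 ∈ mxy K) :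
    w * ⟨Polynomial.monomial 1 u, hum⟩ ∈
      Ideal.map (algebraMap (MvPolynomial (Fin 2) K) ↥(reesAlgebra I)) (mxy K) := by
  classical
  set p := (w : Polynomial (MvPolynomial (Fin 2) K)) with hp
  have hco : ∀ n, p.coeff n * u ∈ mxy K * I ^ (n+1) := by
    intro n
    cases n with
    | zero =>
      rw [zero_add, pow_one]
      exact Ideal.mul_mem_mul hw0 hu
    | succ n =>
      have h1 : p.coeff (n+1) * u ∈ I ^ (n+1) * Ideal.span {u} :=
        Ideal.mul_mem_mul (w.2 (n+1)) (Ideal.subset_span rfl)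
      have h2 : I ^ (n+1) * Ideal.span {u} ≤ mxy K * I ^ (n+1+1) := by
        have e1 : I ^ (n+1) * Ideal.span {u} = I ^ n * (Ideal.span {u} * I) := by ring
        rw [e1]
        calc I ^ n * (Ideal.span {u} * I) ≤ I ^ n * (mxy K * I ^ 2) :=
              Ideal.mul_mono_right hu2
          _ = mxy K * I ^ (n+1+1) := by ring
      exact h2 h1
  have hmem : ∀ n, Polynomial.monomial (n+1) (p.coeff n * u) ∈ reesAlgebra I := fun n =>
    reesAlgebra.monomial_mem.mpr (Ideal.mul_le_right (hco n))
  have hkey : (w * ⟨Polynomial.monomial 1 u, hum⟩ : reesAlgebra I) =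
      ∑ n ∈ p.support, (⟨Polynomial.monomial (n+1) (p.coeff n * u), hmem n⟩ : reesAlgebra I) := by
    apply Subtype.ext
    push_cast
    rw [← hp]
    conv_lhs => rw [Polynomial.as_sum_support p]
    rw [Finset.sum_mul]
    refine Finset.sum_congr rfl fun n _ => ?_
    rw [Polynomial.monomial_mul_monomial]
  rw [hkey]
  exact Ideal.sum_mem _ fun n _ => monomial_mem_map I (n+1) _ (hco n) (hmem n)

lemma one_not_mem_mxy : (1 : MvPolynomial (Fin 2) K) ∉ mxy K := by
  rw [mxy_eq]
  intro h
  have h1 : (1 : MvPolynomial (Fin 2) K) = monomial (E 0 0) 1 := by simp [E]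
  rw [h1, mem_span_mono] at h
  obtain ⟨t, ht, hle⟩ := h
  have ht' : t = E 1 0 ∨ t = E 0 1 := by simpa [WS, Set.mem_insert_iff] using ht
  have h00 : (E 0 0 : Fin 2 →₀ ℕ) = 0 := by simp [E]
  rcases ht' with rfl | rfl <;> (rw [h00, ← h00, E_le_iff] at hle; omega)

/-- **Proposition 3.1.** Let `m ≥ 5` and let `I ⊆ K[x,y]` be the symmetric monomial
ideal whose `a`-sequence is `(5m, 4m, 4m-1, …, 3m+4, m, 0)` and with `b i = a (m-i+1)`,
i.e. `I = (x^{5m}, x^{4m} y^m, x^{4m-1} y^{3m+4}, …, x^{3m+4} y^{4m-1}, x^m y^{4m},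
y^{5m})`.  Then `depth F(I) = 0`.  In fact, every minimal generator
`u = x^(a i) y^(b i)`, `3 ≤ i ≤ m-2`, of `I` of degree `7m+3` satisfies
`u·I ⊆ m·I²` and `u ∉ m·I`, so `u + mI` is a nonzero socle element of `F(I)`. -/
theorem stmt_12 (K : Type) [Field K] (m : ℕ) (hm : 5 ≤ m)
    (I : Ideal (MvPolynomial (Fin 2) K))
    (hI : I = Ideal.span
      ((fun i => X 0 ^ aseq m i * X 1 ^ aseq m (m - i + 1)) '' Set.Icc 1 m)) :
    idealDepth (A := FiberCone K I) (fiberMax K I) = 0 ∧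
    ∀ i, 3 ≤ i → i ≤ m - 2 →
      Ideal.span {X 0 ^ aseq m i * X 1 ^ aseq m (m - i + 1)} * I ≤ mxy K * I ^ 2 ∧
      X 0 ^ aseq m i * X 1 ^ aseq m (m - i + 1) ∉ mxy K * I := by
  have hpart2 : ∀ i, 3 ≤ i → i ≤ m - 2 →
      Ideal.span {X 0 ^ aseq m i * X 1 ^ aseq m (m - i + 1)} * I ≤ mxy K * I ^ 2 ∧
      X 0 ^ aseq m i * X 1 ^ aseq m (m - i + 1) ∉ mxy K * I :=
    fun i h3 hi => key K m hm i h3 hi I hI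
  refine ⟨?_, hpart2⟩
  obtain ⟨hu2, hu1⟩ := hpart2 3 le_rfl (by omega)
  set u := (X 0 ^ aseq m 3 * X 1 ^ aseq m (m - 3 + 1) : MvPolynomial (Fin 2) K) with hu
  have huI : u ∈ I := by
    rw [hI]; exact Ideal.subset_span ⟨3, by rw [Set.mem_Icc]; omega, rfl⟩
  have hum : Polynomial.monomial 1 u ∈ reesAlgebra I :=
    reesAlgebra.monomial_mem.mpr (by rwa [pow_one])
  set Z : FiberCone K I :=
    Ideal.Quotient.mk _ (⟨Polynomial.monomial 1 u, hum⟩ : reesAlgebra I) with hZdef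
  have hZ : Z ≠ 0 := by
    intro h0
    rw [hZdef, Ideal.Quotient.eq_zero_iff_mem] at h0
    have h1 := (coeff_mem_of_mem_map I h0).2
    rw [Polynomial.coeff_monomial] at h1
    simp only [if_pos rfl] at h1
    exact hu1 h1
  have hkill : ∀ r ∈ fiberMax K I, r * Z = 0 := by
    intro r hr
    rw [fiberMax] at hr
    obtain ⟨w, hw, rfl⟩ :=
      (Ideal.mem_map_iff_of_surjective _ Ideal.Quotient.mk_surjective).mp hr
    rw [RingHom.mem_ker, RingHom.comp_apply, RingHom.comp_apply] at hw
    have hw0 : (w : Polynomial (MvPolynomial (Fin 2) K)).coeff 0 ∈ mxy K := by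
      rw [Polynomial.coeff_zero_eq_eval_zero]
      exact Ideal.Quotient.eq_zero_iff_mem.mp hw
    rw [hZdef, ← map_mul, Ideal.Quotient.eq_zero_iff_mem]
    exact socle_mul_mem I u huI hu2 hum w hw0
  haveI hnt : Nontrivial (FiberCone K I) := by
    refine Ideal.Quotient.nontrivial_iff.mpr ?_
    intro hT
    have h1 : (1 : reesAlgebra I) ∈
        Ideal.map (algebraMap (MvPolynomial (Fin 2) K) ↥(reesAlgebra I)) (mxy K) := by
      rw [hT]; trivial
    have h2 := (coeff_mem_of_mem_map I h1).1
    simp only [OneMemClass.coe_one, Polynomial.coeff_one, if_pos rfl] at h2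
    exact one_not_mem_mxy h2
  have hset : {n : ℕ∞ | ∃ rs : List (FiberCone K I), (∀ r ∈ rs, r ∈ fiberMax K I) ∧
      RingTheory.Sequence.IsRegular (FiberCone K I) rs ∧ (rs.length : ℕ∞) = n} = {0} := by
    ext n
    simp only [Set.mem_setOf_eq, Set.mem_singleton_iff]
    constructor
    · rintro ⟨rs, hmem, hreg, hlen⟩
      cases rs with
      | nil => simpa using hlen.symm
      | cons r rest =>
        exfalso
        have hsr : IsSMulRegular (FiberCone K I) r :=
          ((RingTheory.Sequence.isRegular_cons_iff _ _ _).mp hreg).1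
        have h0 : r • Z = r • (0 : FiberCone K I) := by
          simp only [smul_eq_mul]
          rw [hkill r (hmem r List.mem_cons_self)]
          ring
        exact hZ (hsr h0)
    · rintro rfl
      exact ⟨[], by simp, RingTheory.Sequence.IsRegular.nil (FiberCone K I) (FiberCone K I), by simp⟩
  rw [idealDepth, hset, sSup_singleton]
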